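/- arXiv:1406.6740 — 2 statements merged into one kernel-verified Lean document; each statement's English description precedes it below -/
import Mathlib

section
/- Assume the forward spiral condition V_{N+k} = M·T(V_{k−1}) for all k ≥ 1, the normalization det ρ_j = 1 for j = 0, 1, …, N, that a_j ≠ 0 for all j, and that a_N = a_1 and c_{−1} = a_{N−1}/a_0. Set A_j := c_j + a_j·b_{j−1} and assume A_1 ≠ 0. Then: (i) c_{N+2} = A_3/A_1; and (ii) M⁻¹·((V_{N+1}×V_{N+2})×(V_{N−1}×V_N)) = (A_0²·A_1/(c_{−1}·c_N))·V_0. Consequently M⁻¹·T̄(V_{N+1}) = (A_3·A_0²/(c_{−1}·c_N))·V_0, where T̄(V_{N+1}) := c_{N+2}·((V_{N+1}×V_{N+2})×(V_{N−1}×V_N)). -/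
/-!
Expanding the double cross product gives `T(V_j) = det ρ_{j-1} • (V_{j+2} - b_{j-1} V_j)`, and in the
basis `V_k, V_{k+1}, V_{k+2}` one reads off
`det (T(V_k), T(V_{k+1}), T(V_{k+2})) = det ρ_{k-1} (det ρ_k)² det ρ_{k+1} A_k A_{k+1}`.
By the spiral condition and `det M = 1` this is `det ρ_{N+k+1}`, so the normalization gives
`det ρ_{N+1} = det ρ_{-1} A_0 A_1`, `det ρ_{N+2} = A_1 A_2` and `det ρ_{N+3} = A_2 A_3`. Since `c_j` is
the ratio `det ρ_{j+1} / det ρ_j`, this yields (i) and `c_{-1} c_N = A_0 A_1`.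
For (ii), the double cross product equals `V_{N+2} - a_{N-1} V_{N+1} = M (T(V_1) - a_{N-1} T(V_0))`,
and `a_{N-1} det ρ_{-1} = a_0` (from `c_{-1} det ρ_{-1} = det ρ_0 = 1`) collapses this to `A_0 V_0`.
-/

open Matrix

/-- The 3×3 matrix with columns `u, v, w`. -/
def colMat (u v w : Fin 3 → ℝ) : Matrix (Fin 3) (Fin 3) ℝ :=
  Matrix.of fun i j => ![u, v, w] j i

lemma det_colMat (u v w : Fin 3 → ℝ) :
    (colMat u v w).det = u 0 * v 1 * w 2 - u 0 * v 2 * w 1 - u 1 * v 0 * w 2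
      + u 1 * v 2 * w 0 + u 2 * v 0 * w 1 - u 2 * v 1 * w 0 := by
  simp only [colMat, det_fin_three, of_apply, cons_val', cons_val_fin_one, cons_val_zero,
    cons_val_one, cons_val]
  ring

lemma det_colMat_smul (r s t : ℝ) (u v w : Fin 3 → ℝ) :
    (colMat (r • u) (s • v) (t • w)).det = r * s * t * (colMat u v w).det := by
  simp only [det_colMat, Pi.smul_apply, smul_eq_mul]
  ring

lemma mul_colMat (M : Matrix (Fin 3) (Fin 3) ℝ) (u v w : Fin 3 → ℝ) :
    M * colMat u v w = colMat (M *ᵥ u) (M *ᵥ v) (M *ᵥ w) := by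
  ext i j
  fin_cases j <;> simp [colMat, Matrix.mul_apply, Matrix.mulVec, dotProduct, Fin.sum_univ_three]

lemma cross_cross_cross (u v w x : Fin 3 → ℝ) :
    (u ⨯₃ v) ⨯₃ (w ⨯₃ x) = (colMat u v x).det • w - (colMat u v w).det • x := by
  funext i
  fin_cases i <;>
  · simp only [cross_apply, det_colMat, Fin.zero_eta, Fin.mk_one, Fin.reduceFinMk, cons_val_zero,
      cons_val_one, cons_val, Pi.sub_apply, Pi.smul_apply, smul_eq_mul]
    ring

-- No side conditions are needed since `x / 0 = 0`.
lemma mul_sq_div_mul_eq {K : Type*} [Field K] (x y z : K) : x * y ^ 2 / (y * z) = x / z * y := by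
  rcases eq_or_ne y 0 with rfl | hy
  · simp
  rcases eq_or_ne z 0 with rfl | hz
  · simp
  field_simp

def SatisfiesRecurrence (V : ℤ → Fin 3 → ℝ) (a b c : ℤ → ℝ) : Prop :=
  ∀ j : ℤ, V (j + 3) = a j • V (j + 2) + b j • V (j + 1) + c j • V j

/-- The paper's `ρ_j`. -/
def frame (V : ℤ → Fin 3 → ℝ) (j : ℤ) : Matrix (Fin 3) (Fin 3) ℝ :=
  colMat (V j) (V (j + 1)) (V (j + 2))

/-- The paper's `T(V_j)`, a lift of the pentagram map. -/
def pentagramLift (V : ℤ → Fin 3 → ℝ) (j : ℤ) : Fin 3 → ℝ :=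
  (V (j - 1) ⨯₃ V (j + 1)) ⨯₃ (V j ⨯₃ V (j + 2))

/-- The paper's `A_j`. -/
def liftCoeff (a b c : ℤ → ℝ) (j : ℤ) : ℝ :=
  c j + a j * b (j - 1)

def IsForwardSpiral (V : ℤ → Fin 3 → ℝ) (M : Matrix (Fin 3) (Fin 3) ℝ) (N : ℤ) : Prop :=
  ∀ k : ℤ, 1 ≤ k → V (N + k) = M *ᵥ pentagramLift V (k - 1)

lemma frame_mulVec (V : ℤ → Fin 3 → ℝ) (j : ℤ) (x : Fin 3 → ℝ) :
    frame V j *ᵥ x = x 0 • V j + x 1 • V (j + 1) + x 2 • V (j + 2) := by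
  funext i
  simp only [frame, colMat, mulVec, dotProduct, Fin.sum_univ_three, of_apply, cons_val',
    cons_val_fin_one, cons_val_zero, cons_val_one, cons_val, Pi.add_apply, Pi.smul_apply, smul_eq_mul]
  ring

section Spiral

variable {V : ℤ → Fin 3 → ℝ} {a b c : ℤ → ℝ}

lemma det_frame_succ
    (hrec : SatisfiesRecurrence V a b c) (j : ℤ) :
    (frame V (j + 1)).det = c j * (frame V j).det := by
  simp only [frame, add_assoc, show (1 : ℤ) + 1 = 2 by norm_num, show (1 : ℤ) + 2 = 3 by norm_num,
    hrec j, det_colMat, Pi.add_apply, Pi.smul_apply, smul_eq_mul]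
  ring

lemma det_frame_succ_div
    (hrec : SatisfiesRecurrence V a b c) {j : ℤ}
    (hj : (frame V j).det ≠ 0) :
    (frame V (j + 1)).det / (frame V j).det = c j := by
  rw [det_frame_succ hrec, mul_div_cancel_right₀ _ hj]

lemma pentagramLift_eq
    (hrec : SatisfiesRecurrence V a b c) (j : ℤ) :
    pentagramLift V j = (frame V (j - 1)).det • (V (j + 2) - b (j - 1) • V j) := by
  have h := hrec (j - 1)
  simp only [show j - 1 + 3 = j + 2 by ring, show j - 1 + 2 = j + 1 by ring,
    sub_add_cancel] at h
  simp only [pentagramLift, cross_cross_cross, frame, sub_add_cancel,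
    show j - 1 + 2 = j + 1 by ring]
  rw [h]
  funext i
  simp only [det_colMat, Pi.add_apply, Pi.sub_apply, Pi.smul_apply, smul_eq_mul]
  ring

lemma cross_cross_eq_frame
    (hrec : SatisfiesRecurrence V a b c) (n : ℤ) :
    (V (n + 1) ⨯₃ V (n + 2)) ⨯₃ (V (n - 1) ⨯₃ V n)
      = (frame V (n - 1)).det • (V (n + 2) - a (n - 1) • V (n + 1)) := by
  have h := hrec (n - 1)
  simp only [show n - 1 + 3 = n + 2 by ring, show n - 1 + 2 = n + 1 by ring,
    sub_add_cancel] at h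
  simp only [cross_cross_cross, frame, sub_add_cancel, show n - 1 + 2 = n + 1 by ring]
  rw [h]
  funext i
  simp only [det_colMat, Pi.add_apply, Pi.sub_apply, Pi.smul_apply, smul_eq_mul]
  ring

lemma det_pentagramLift
    (hrec : SatisfiesRecurrence V a b c) (k : ℤ) :
    (colMat (pentagramLift V k) (pentagramLift V (k + 1)) (pentagramLift V (k + 2))).det
      = (frame V (k - 1)).det * (frame V k).det ^ 2 * (frame V (k + 1)).det
        * liftCoeff a b c k * liftCoeff a b c (k + 1) := by
  have h3 := hrec k
  have h4 := hrec (k + 1)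
  rw [show k + 1 + 3 = k + 4 by ring, show k + 1 + 2 = k + 3 by ring,
    show k + 1 + 1 = k + 2 by ring] at h4
  have e0 : pentagramLift V k = (frame V (k - 1)).det • (frame V k *ᵥ ![-b (k - 1), 0, 1]) := by
    rw [pentagramLift_eq hrec, frame_mulVec]
    congr 1
    simp only [cons_val_zero, cons_val_one, cons_val]
    module
  have e1 : pentagramLift V (k + 1) = (frame V k).det • (frame V k *ᵥ ![c k, 0, a k]) := by
    rw [pentagramLift_eq hrec, frame_mulVec, add_sub_cancel_right,
      show k + 1 + 2 = k + 3 by ring, h3]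
    congr 1
    simp only [cons_val_zero, cons_val_one, cons_val]
    module
  have e2 : pentagramLift V (k + 2) = (frame V (k + 1)).det •
      (frame V k *ᵥ ![a (k + 1) * c k, a (k + 1) * b k + c (k + 1), a (k + 1) * a k]) := by
    rw [pentagramLift_eq hrec, frame_mulVec, show k + 2 - 1 = k + 1 by ring,
      show k + 2 + 2 = k + 4 by ring, h4, h3]
    congr 1
    simp only [cons_val_zero, cons_val_one, cons_val]
    module
  rw [e0, e1, e2, det_colMat_smul, ← mul_colMat, det_mul, liftCoeff, liftCoeff, add_sub_cancel_right]
  simp only [det_colMat, cons_val_zero, cons_val_one, cons_val]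
  ring

lemma pentagramLift_succ_sub_smul
    (hrec : SatisfiesRecurrence V a b c) (j : ℤ) (t : ℝ)
    (ht : t * (frame V (j - 1)).det = a j * (frame V j).det) :
    pentagramLift V (j + 1) - t • pentagramLift V j
      = ((frame V j).det * liftCoeff a b c j) • V j := by
  rw [liftCoeff, pentagramLift_eq hrec, pentagramLift_eq hrec, add_sub_cancel_right,
    show j + 1 + 2 = j + 3 by ring, hrec j, smul_smul, ht]
  module

variable {M : Matrix (Fin 3) (Fin 3) ℝ} {N : ℤ}

lemma det_frame_of_spiral
    (hrec : SatisfiesRecurrence V a b c)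
    (hfwd : IsForwardSpiral V M N) {k : ℤ} (hk : 0 ≤ k) :
    (frame V (N + k + 1)).det = M.det * (frame V (k - 1)).det * (frame V k).det ^ 2
      * (frame V (k + 1)).det * liftCoeff a b c k * liftCoeff a b c (k + 1) := by
  have hV : ∀ i : ℤ, 0 ≤ i → V (N + k + 1 + i) = M *ᵥ pentagramLift V (k + i) := fun i hi ↦ by
    rw [show N + k + 1 + i = N + (k + i + 1) by ring, hfwd _ (by omega), add_sub_cancel_right]
  have h := hV 0 le_rfl
  rw [add_zero, add_zero] at h
  rw [frame, h, hV 1 zero_le_one, hV 2 zero_le_two, ← mul_colMat, det_mul, det_pentagramLift hrec]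
  ring

lemma inv_mulVec_cross_cross_of_spiral
    (hrec : SatisfiesRecurrence V a b c)
    (hM : IsUnit M.det) (hfwd : IsForwardSpiral V M N)
    (hN : (frame V (N - 1)).det = 1) (h₀ : (frame V 0).det = 1)
    (ha : a (N - 1) * (frame V (-1)).det = a 0) :
    M⁻¹ *ᵥ ((V (N + 1) ⨯₃ V (N + 2)) ⨯₃ (V (N - 1) ⨯₃ V N)) = liftCoeff a b c 0 • V 0 := by
  have hback := pentagramLift_succ_sub_smul hrec 0 (a (N - 1)) (by rw [zero_sub, ha, h₀, mul_one])
  rw [zero_add, h₀, one_mul] at hback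
  rw [cross_cross_eq_frame hrec, hN, one_smul, hfwd 2 (by norm_num), hfwd 1 le_rfl, ← mulVec_smul,
    ← mulVec_sub, mulVec_mulVec, nonsing_inv_mul M hM, one_mulVec]
  norm_num [hback]

end Spiral

theorem twisted_inverse_failure_general (N : ℕ) (hN : 5 ≤ N)
    (V : ℤ → Fin 3 → ℝ) (a b c : ℤ → ℝ)
    (hrec : ∀ j : ℤ, V (j + 3) = a j • V (j + 2) + b j • V (j + 1) + c j • V j)
    (ρ : ℤ → Matrix (Fin 3) (Fin 3) ℝ)
    (hρ : ∀ j : ℤ, ρ j = colMat (V j) (V (j + 1)) (V (j + 2)))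
    (hρinv : ∀ j : ℤ, IsUnit (ρ j))
    (M : Matrix (Fin 3) (Fin 3) ℝ) (hM : M.det = 1)
    (T : ℤ → Fin 3 → ℝ)
    (hT : ∀ j : ℤ, T j =
      crossProduct (crossProduct (V (j - 1)) (V (j + 1))) (crossProduct (V j) (V (j + 2))))
    (hfwd : ∀ k : ℤ, 1 ≤ k → V ((N : ℤ) + k) = M.mulVec (T (k - 1)))
    (hnorm : ∀ j : ℤ, 0 ≤ j → j ≤ (N : ℤ) → (ρ j).det = 1)
    (ha : ∀ j : ℤ, a j ≠ 0)
    (hcm1 : c (-1) = a ((N : ℤ) - 1) / a 0)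
    (A : ℤ → ℝ) (hA : ∀ j : ℤ, A j = c j + a j * b (j - 1)) :
    c ((N : ℤ) + 2) = A 3 / A 1 ∧
    M⁻¹.mulVec (crossProduct
        (crossProduct (V ((N : ℤ) + 1)) (V ((N : ℤ) + 2)))
        (crossProduct (V ((N : ℤ) - 1)) (V (N : ℤ))))
      = ((A 0) ^ 2 * A 1 / (c (-1) * c (N : ℤ))) • V 0 ∧
    M⁻¹.mulVec (c ((N : ℤ) + 2) • crossProduct
        (crossProduct (V ((N : ℤ) + 1)) (V ((N : ℤ) + 2)))
        (crossProduct (V ((N : ℤ) - 1)) (V (N : ℤ))))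
      = (A 3 * (A 0) ^ 2 / (c (-1) * c (N : ℤ))) • V 0 := by
  obtain rfl : ρ = frame V := funext hρ
  obtain rfl : T = pentagramLift V := funext hT
  obtain rfl : A = liftCoeff a b c := funext hA
  set A := liftCoeff a b c
  set n : ℤ := (N : ℤ)
  have hn : (5 : ℤ) ≤ n := by omega
  have hD : ∀ j : ℤ, 0 ≤ j → j ≤ 3 → (frame V j).det = 1 := fun j h₀ h₁ ↦ hnorm j h₀ (by omega)
  have hdet (j : ℤ) : (frame V j).det ≠ 0 := ((isUnit_iff_isUnit_det _).mp (hρinv j)).ne_zero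
  have hspiral (k : ℤ) (h₀ : 0 ≤ k) (h₁ : k ≤ 2) :
      (frame V (n + k + 1)).det = (frame V (k - 1)).det * A k * A (k + 1) := by
    rw [det_frame_of_spiral hrec hfwd h₀, hM, hD k h₀ (by omega), hD (k + 1) (by omega) (by omega)]
    ring
  have h0 := hspiral 0 le_rfl (by norm_num)
  have h1 := hspiral 1 (by norm_num) (by norm_num)
  have h2 := hspiral 2 (by norm_num) (by norm_num)
  norm_num [add_assoc, hD] at h0 h1 h2
  have hcD : c (-1) * (frame V (-1)).det = 1 := by
    simpa [hD 0 le_rfl (by norm_num)] using (det_frame_succ hrec (-1)).symm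
  have hcn : c (-1) * c n = A 0 * A 1 := by
    rw [← det_frame_succ_div hrec (hdet n), h0, hnorm n (by omega) le_rfl]
    linear_combination A 0 * A 1 * hcD
  have hA12 : A 1 * A 2 ≠ 0 := h1 ▸ hdet (n + 2)
  have h_coeff : c (n + 2) = A 3 / A 1 := by
    rw [← det_frame_succ_div hrec (hdet _), add_assoc, show (2 : ℤ) + 1 = 3 by norm_num, h1, h2,
      mul_comm (A 1), mul_div_mul_left _ _ (right_ne_zero_of_mul hA12)]
  have hscalar : A 0 ^ 2 * A 1 / (c (-1) * c n) = A 0 := by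
    rw [hcn, mul_comm, mul_sq_div_mul_eq, div_self (left_ne_zero_of_mul hA12), one_mul]
  have h_cross : M⁻¹ *ᵥ ((V (n + 1) ⨯₃ V (n + 2)) ⨯₃ (V (n - 1) ⨯₃ V n))
      = (A 0 ^ 2 * A 1 / (c (-1) * c n)) • V 0 := by
    rw [inv_mulVec_cross_cross_of_spiral hrec (by simp [hM]) hfwd (hnorm _ (by omega) (by omega))
      (hD 0 le_rfl (by norm_num)), hscalar]
    rw [(div_eq_iff (ha 0)).mp hcm1.symm]
    linear_combination a 0 * hcD
  refine ⟨h_coeff, h_cross, ?_⟩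
  rw [mulVec_smul, h_cross, smul_smul, h_coeff, hscalar, hcn, mul_sq_div_mul_eq]

/-- under the forward spiral condition, the normalization
`det ρ_j = 1` for `j = 0, …, N`, `a_j ≠ 0` for all `j`, `a_N = a₁`,
`c_{−1} = a_{N−1}/a₀`, with `A_j = c_j + a_j·b_{j−1}` and `A₁ ≠ 0`:
(i) `c_{N+2} = A₃/A₁`;
(ii) `M⁻¹·((V_{N+1}×V_{N+2})×(V_{N−1}×V_N)) = (A₀²·A₁/(c_{−1}·c_N))·V₀`; and
consequently `M⁻¹·T̄(V_{N+1}) = (A₃·A₀²/(c_{−1}·c_N))·V₀`, where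
`T̄(V_{N+1}) = c_{N+2}·((V_{N+1}×V_{N+2})×(V_{N−1}×V_N))`. -/
theorem twisted_inverse_failure (N : ℕ) (hN : 5 ≤ N)
    (V : ℤ → Fin 3 → ℝ) (a b c : ℤ → ℝ)
    (hrec : ∀ j : ℤ, V (j + 3) = a j • V (j + 2) + b j • V (j + 1) + c j • V j)
    (ρ : ℤ → Matrix (Fin 3) (Fin 3) ℝ)
    (hρ : ∀ j : ℤ, ρ j = colMat (V j) (V (j + 1)) (V (j + 2)))
    (hρinv : ∀ j : ℤ, IsUnit (ρ j))
    (M : Matrix (Fin 3) (Fin 3) ℝ) (hM : M.det = 1)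
    (T : ℤ → Fin 3 → ℝ)
    (hT : ∀ j : ℤ, T j =
      crossProduct (crossProduct (V (j - 1)) (V (j + 1))) (crossProduct (V j) (V (j + 2))))
    (hfwd : ∀ k : ℤ, 1 ≤ k → V ((N : ℤ) + k) = M.mulVec (T (k - 1)))
    (hnorm : ∀ j : ℤ, 0 ≤ j → j ≤ (N : ℤ) → (ρ j).det = 1)
    (ha : ∀ j : ℤ, a j ≠ 0)
    (haN : a (N : ℤ) = a 1)
    (hcm1 : c (-1) = a ((N : ℤ) - 1) / a 0)
    (A : ℤ → ℝ) (hA : ∀ j : ℤ, A j = c j + a j * b (j - 1))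
    (hA1 : A 1 ≠ 0) :
    c ((N : ℤ) + 2) = A 3 / A 1 ∧
    M⁻¹.mulVec (crossProduct
        (crossProduct (V ((N : ℤ) + 1)) (V ((N : ℤ) + 2)))
        (crossProduct (V ((N : ℤ) - 1)) (V (N : ℤ))))
      = ((A 0) ^ 2 * A 1 / (c (-1) * c (N : ℤ))) • V 0 ∧
    M⁻¹.mulVec (c ((N : ℤ) + 2) • crossProduct
        (crossProduct (V ((N : ℤ) + 1)) (V ((N : ℤ) + 2)))
        (crossProduct (V ((N : ℤ) - 1)) (V (N : ℤ))))
      = (A 3 * (A 0) ^ 2 / (c (-1) * c (N : ℤ))) • V 0 :=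
  twisted_inverse_failure_general N hN V a b c hrec ρ hρ hρinv M hM T hT hfwd hnorm ha hcm1 A hA
end

section
/- Assume the forward spiral condition V_{N+k} = M·T(V_{k−1}) for all k ≥ 1. For i ∈ ℤ let u_i := (c_i, 0, a_i)ᵀ and let 𝒜_1 be the 3×3 matrix with columns d_{−1}·u_{−1}, d_0·K_{−1}·u_0, and d_1·K_{−1}·K_0·u_1, and assume 𝒜_1 is invertible. Then ρ_0⁻¹·M·ρ_0 = K_0·K_1·⋯·K_N·𝒜_1⁻¹·K_{−1}. -/
open Matrix

lemma mul_colMat_s19 (A : Matrix (Fin 3) (Fin 3) ℝ) (x y z : Fin 3 → ℝ) :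
    A * colMat x y z = colMat (A.mulVec x) (A.mulVec y) (A.mulVec z) := by
  ext i j
  fin_cases j <;>
    simp [colMat, Matrix.mul_apply, Matrix.mulVec, dotProduct, Fin.sum_univ_three]

lemma crossT (p q r : Fin 3 → ℝ) (a b c : ℝ) :
    crossProduct (crossProduct p r) (crossProduct q (a • r + b • q + c • p))
      = (colMat p q r).det • (c • p + a • r) := by
  funext i
  simp [cross_apply, colMat, Matrix.det_fin_three, Pi.smul_apply]
  fin_cases i <;> (simp; ring)

lemma colMat_mulVec (p q r x : Fin 3 → ℝ) :
    (colMat p q r).mulVec x = x 0 • p + x 1 • q + x 2 • r := by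
  funext i
  simp [colMat, Matrix.mulVec, dotProduct, Fin.sum_univ_three, mul_comm]

/-- under the forward spiral condition, with `𝒜₁` the matrix with
columns `d_{−1}·u_{−1}`, `d₀·K_{−1}·u₀`, `d₁·K_{−1}·K₀·u₁` (where
`u_i = (c_i, 0, a_i)ᵀ`) assumed invertible, the conjugated monodromy satisfies
`ρ₀⁻¹·M·ρ₀ = K₀·K₁·⋯·K_N·𝒜₁⁻¹·K_{−1}`. -/
theorem monodromy_conjugation (N : ℕ) (hN : 5 ≤ N)
    (V : ℤ → Fin 3 → ℝ) (a b c : ℤ → ℝ)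
    (hrec : ∀ j : ℤ, V (j + 3) = a j • V (j + 2) + b j • V (j + 1) + c j • V j)
    (ρ : ℤ → Matrix (Fin 3) (Fin 3) ℝ)
    (hρ : ∀ j : ℤ, ρ j = colMat (V j) (V (j + 1)) (V (j + 2)))
    (hρinv : ∀ j : ℤ, IsUnit (ρ j))
    (d : ℤ → ℝ) (hd : ∀ j : ℤ, d j = (ρ j).det)
    (K : ℤ → Matrix (Fin 3) (Fin 3) ℝ)
    (hK : ∀ j : ℤ, K j = !![0, 0, c j; 1, 0, b j; 0, 1, a j])
    (M : Matrix (Fin 3) (Fin 3) ℝ) (hM : M.det = 1)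
    (T : ℤ → Fin 3 → ℝ)
    (hT : ∀ j : ℤ, T j =
      crossProduct (crossProduct (V (j - 1)) (V (j + 1))) (crossProduct (V j) (V (j + 2))))
    (hfwd : ∀ k : ℤ, 1 ≤ k → V ((N : ℤ) + k) = M.mulVec (T (k - 1)))
    (u : ℤ → Fin 3 → ℝ) (hu : ∀ i : ℤ, u i = ![c i, 0, a i])
    (𝒜₁ : Matrix (Fin 3) (Fin 3) ℝ)
    (h𝒜₁ : 𝒜₁ = colMat (d (-1) • u (-1)) (d 0 • (K (-1)).mulVec (u 0))
      (d 1 • ((K (-1) * K 0).mulVec (u 1))))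
    (h𝒜₁inv : IsUnit 𝒜₁) :
    (ρ 0)⁻¹ * M * ρ 0
      = ((List.range (N + 1)).map fun j => K (j : ℤ)).prod * 𝒜₁⁻¹ * K (-1) := by
  -- Step B: ρ (j+1) = ρ j * K j
  have hstep : ∀ j : ℤ, ρ (j + 1) = ρ j * K j := by
    intro j
    rw [hρ, hρ, hK]
    have h3 : j + 1 + 2 = j + 3 := by ring
    rw [show j + 1 + 1 = j + 2 by ring, h3, hrec j]
    ext i l
    fin_cases l <;>
      simp [colMat, Matrix.mul_apply, Fin.sum_univ_three, Pi.smul_apply] <;> ring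
  -- Step D: T (j+1) = d j • (ρ j).mulVec (u j)
  have hTd : ∀ j : ℤ, T (j + 1) = d j • (ρ j).mulVec (u j) := by
    intro j
    rw [hT, show j + 1 - 1 = j by ring, show j + 1 + 1 = j + 2 by ring,
      show j + 1 + 2 = j + 3 by ring, hrec j, hd, hρ, hu, crossT]
    rw [colMat_mulVec]
    simp
  -- Step F: ρ 0 * prod = ρ n
  have hprod : ∀ n : ℕ, ρ 0 * ((List.range n).map fun j => K (j : ℤ)).prod = ρ (n : ℤ) := by
    intro n
    induction n with
    | zero => simp
    | succ n ih =>
      have hsucc : ((List.range (n+1)).map fun j => K (j : ℤ)).prod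
          = ((List.range n).map fun j => K (j : ℤ)).prod * K (n : ℤ) := by
        simp [List.range_succ]
      rw [hsucc, ← mul_assoc, ih, ← hstep (n : ℤ)]
      push_cast
      ring_nf
  -- Step E: ρ (N+1) = M * (ρ (-1) * 𝒜₁)
  have hE : ρ ((N : ℤ) + 1) = M * (ρ (-1) * 𝒜₁) := by
    rw [h𝒜₁, mul_colMat_s19, mul_colMat_s19]
    have hs0 := hstep 0; norm_num at hs0
    have hs1 := hstep 1; norm_num at hs1
    have hr0 : ρ (0 : ℤ) = ρ (-1) * K (-1) := by rw [← hstep (-1)]; norm_num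
    have hr1 : ρ (1 : ℤ) = ρ (-1) * (K (-1) * K 0) := by
      rw [← mul_assoc, ← hr0, ← hs0]
    have ht0 := hTd (-1); norm_num at ht0
    have ht1 := hTd 0; norm_num at ht1
    have ht2 := hTd 1; norm_num at ht2
    have c0 : (ρ (-1)).mulVec (d (-1) • u (-1)) = T 0 := by
      rw [mulVec_smul, ← ht0]
    have c1 : (ρ (-1)).mulVec (d 0 • (K (-1)).mulVec (u 0)) = T 1 := by
      rw [mulVec_smul, mulVec_mulVec, ← hr0, ← ht1]
    have c2 : (ρ (-1)).mulVec (d 1 • (K (-1) * K 0).mulVec (u 1)) = T 2 := by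
      rw [mulVec_smul, mulVec_mulVec, ← hr1, ← ht2]
    rw [c0, c1, c2]
    have v1 := hfwd 1 (by norm_num)
    have v2 := hfwd 2 (by norm_num)
    have v3 := hfwd 3 (by norm_num)
    norm_num at v1 v2 v3
    rw [hρ, show (N : ℤ) + 1 + 1 = (N : ℤ) + 2 by ring,
      show (N : ℤ) + 1 + 2 = (N : ℤ) + 3 by ring, v1, v2, v3]
  -- invertibility facts
  have hρ0 := hρinv 0
  have hρm1 := hρinv (-1)
  -- final assembly
  have hMeq : M = ρ ((N : ℤ) + 1) * 𝒜₁⁻¹ * (ρ (-1))⁻¹ := by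
    rw [hE, ← mul_assoc M,
      Matrix.mul_nonsing_inv_cancel_right _ _ ((Matrix.isUnit_iff_isUnit_det _).mp h𝒜₁inv),
      Matrix.mul_nonsing_inv_cancel_right _ _ ((Matrix.isUnit_iff_isUnit_det _).mp hρm1)]
  have hKm1 : K (-1) = (ρ (-1))⁻¹ * ρ 0 := by
    have hr0 : ρ (0 : ℤ) = ρ (-1) * K (-1) := by rw [← hstep (-1)]; norm_num
    rw [hr0
, ← mul_assoc, Matrix.nonsing_inv_mul _ ((Matrix.isUnit_iff_isUnit_det _).mp hρm1),
      one_mul]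
  have hP : ((List.range (N + 1)).map fun j => K (j : ℤ)).prod
      = (ρ 0)⁻¹ * ρ ((N : ℤ) + 1) := by
    have := hprod (N + 1)
    push_cast at this
    rw [← this, ← mul_assoc, Matrix.nonsing_inv_mul _ ((Matrix.isUnit_iff_isUnit_det _).mp hρ0),
      one_mul]
  rw [hMeq, hKm1, hP]
  noncomm_ring
end
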